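/- Let V ≥ 0 be a random variable with cumulative distribution function F(h) = P(V ≤ h), and assume F is regularly varying at 0 with index D (a positive integer) and F(h) > 0 for h > 0. Let K:[0,1]→[0,∞) be of class C¹, extended by 0 outside [0,1]. Let h_n ↓ 0. Then E[K(V/h_n)] / F(h_n) → D ∫₀¹ s^{D−1} K(s) ds as n → ∞. -/

import Mathlib

open Set Filter MeasureTheory intervalIntegral Topology

/-!
Writing `K a = K 1 - ∫_a^1 K'` for `a ∈ [0,1]` and swapping the order of integration gives
`E[K(V/h)] = K(1) F(h) - ∫₀¹ K'(s) F(hs) ds`. Dividing by `F(h)`, the ratios `F(hs)/F(h)` lie in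
`[0,1]` and tend to `s^D`, so dominated convergence gives the limit `K(1) - ∫₀¹ s^D K'(s) ds`,
which is `D ∫₀¹ s^(D-1) K(s) ds` after integrating by parts.
-/

theorem integral_eq_sub_of_hasDerivWithinAt_Icc {E : Type*} [NormedAddCommGroup E]
    [NormedSpace ℝ E] [CompleteSpace E] {f f' : ℝ → E} {a b c : ℝ}
    (hf : ∀ x ∈ Icc a b, HasDerivWithinAt f (f' x) (Icc a b) x) (hf' : IntegrableOn f' (Icc a b))
    (hc : c ∈ Icc a b) : ∫ x in c..b, f' x = f b - f c :=
  integral_eq_sub_of_hasDeriv_right_of_le hc.2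
    (fun x hx => (hf x ⟨hc.1.trans hx.1, hx.2⟩).continuousWithinAt.mono (Icc_subset_Icc_left hc.1))
    (fun x hx => ((hf x ⟨hc.1.trans hx.1.le, hx.2.le⟩).hasDerivAt
      (Icc_mem_nhds (hc.1.trans_lt hx.1) hx.2)).hasDerivWithinAt)
    ((intervalIntegrable_iff_integrableOn_Icc_of_le hc.2).2
      (hf'.mono_set (Icc_subset_Icc_left hc.1)))

theorem eq_indicator_Iic_sub_setIntegral_indicator_Ici {K g : ℝ → ℝ}
    (hK : ∀ a ∈ Icc (0 : ℝ) 1, K a = K 1 - ∫ s in a..1, g s) (hKzero : ∀ v, 1 < v → K v = 0)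
    {a : ℝ} (ha : 0 ≤ a) :
    K a = (Iic 1).indicator (fun _ => K 1) a - ∫ s in Ioc 0 1, (Ici a).indicator g s := by
  rcases le_or_gt a 1 with ha1 | ha1
  · have hIci : (Ici a).indicator g =ᵐ[volume.restrict (Ioc 0 1)] (Ioi a).indicator g :=
      ae_restrict_of_ae (indicator_ae_eq_of_ae_eq_set Ioi_ae_eq_Ici.symm)
    rw [indicator_of_mem (mem_Iic.2 ha1), integral_congr_ae hIci,
      MeasureTheory.integral_indicator measurableSet_Ioi,
      Measure.restrict_restrict measurableSet_Ioi, inter_comm, Ioc_inter_Ioi, sup_of_le_right ha, ← intervalIntegral.integral_of_le ha1,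
      hK a ⟨ha, ha1⟩]
  · rw [hKzero a ha1, indicator_of_notMem (notMem_Iic.2 ha1),
      setIntegral_eq_zero_of_forall_eq_zero fun s hs =>
        indicator_of_notMem (notMem_Ici.2 (hs.2.trans_lt ha1)) g, sub_zero]

theorem integral_comp_eq_sub_integral_measureReal_le {Ω : Type*} [MeasurableSpace Ω]
    {μ : Measure Ω} [IsFiniteMeasure μ] {W : Ω → ℝ} (hW : Measurable W) (hW0 : ∀ ω, 0 ≤ W ω)
    {K g : ℝ → ℝ} (hg : IntegrableOn g (Ioc 0 1))
    (hK : ∀ a ∈ Icc (0 : ℝ) 1, K a = K 1 - ∫ s in a..1, g s) (hKzero : ∀ v, 1 < v → K v = 0) :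
    ∫ ω, K (W ω) ∂μ =
      K 1 * μ.real {ω | W ω ≤ 1} - ∫ s in Ioc 0 1, μ.real {ω | W ω ≤ s} * g s := by
  set f : Ω × ℝ → ℝ := {p | W p.1 ≤ p.2}.indicator fun p => g p.2
  have hf : Integrable f (μ.prod (volume.restrict (Ioc 0 1))) :=
    (hg.comp_snd μ).indicator (measurableSet_le (hW.comp measurable_fst) measurable_snd)
  have hpointwise : ∀ ω, K (W ω) =
      {ω | W ω ≤ 1}.indicator (fun _ => K 1) ω - ∫ s in Ioc 0 1, f (ω, s) :=
    fun ω => eq_indicator_Iic_sub_setIntegral_indicator_Ici hK hKzero (hW0 ω)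
  have hsection : ∀ s, ∫ ω, f (ω, s) ∂μ = μ.real {ω | W ω ≤ s} * g s := fun s =>
    integral_indicator_const (g s) (measurableSet_le hW measurable_const)
  rw [integral_congr_ae (.of_forall hpointwise),
    integral_sub ((integrable_const _).indicator (measurableSet_le hW measurable_const))
      hf.integral_prod_left,
    integral_indicator_const _ (measurableSet_le hW measurable_const),
    integral_integral_swap (f := fun ω s => f (ω, s)) hf, smul_eq_mul, mul_comm]
  simp only [hsection]

theorem tendsto_setIntegral_div_mul_of_tendsto_div {F g φ : ℝ → ℝ} (hFmono : Monotone F)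
    (hFpos : ∀ t, 0 < t → 0 < F t) (hg : IntegrableOn g (Ioc 0 1))
    (hφ : ∀ u ∈ Ioc (0 : ℝ) 1, Tendsto (fun t => F (t * u) / F t) (𝓝[>] 0) (𝓝 (φ u))) :
    Tendsto (fun t => ∫ s in Ioc 0 1, F (t * s) / F t * g s) (𝓝[>] 0)
      (𝓝 (∫ s in Ioc 0 1, φ s * g s)) := by
  refine tendsto_integral_filter_of_dominated_convergence (fun s => ‖g s‖) ?_ ?_ hg.norm ?_
  · exact .of_forall fun t =>
      ((hFmono.measurable.comp (measurable_const_mul t)).div_const _).aestronglyMeasurable.mul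
        hg.aestronglyMeasurable
  · filter_upwards [self_mem_nhdsWithin] with t (ht : 0 < t)
    filter_upwards [ae_restrict_mem measurableSet_Ioc] with s hs
    have hratio : F (t * s) / F t ≤ 1 :=
      (div_le_one (hFpos t ht)).2 (hFmono (mul_le_of_le_one_right ht.le hs.2))
    rw [norm_mul, Real.norm_of_nonneg (div_nonneg (hFpos _ (mul_pos ht hs.1)).le (hFpos t ht).le)]
    exact mul_le_of_le_one_left (norm_nonneg _) hratio
  · filter_upwards [ae_restrict_mem measurableSet_Ioc] with s hs
    exact (hφ s hs).mul_const (g s)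

theorem sub_integral_pow_mul_deriv {K K' : ℝ → ℝ}
    (hK : ∀ s ∈ Icc (0 : ℝ) 1, HasDerivWithinAt K (K' s) (Icc 0 1) s)
    (hK' : IntervalIntegrable K' volume 0 1) {D : ℕ} (hD : 0 < D) :
    K 1 - ∫ s in (0 : ℝ)..1, s ^ D * K' s = D * ∫ s in (0 : ℝ)..1, s ^ (D - 1) * K s := by
  have hpow : ∀ s ∈ uIcc (0 : ℝ) 1,
      HasDerivWithinAt (· ^ D) ((D : ℝ) * s ^ (D - 1)) (uIcc 0 1) s :=
    fun s _ => (hasDerivAt_pow D s).hasDerivWithinAt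
  rw [integral_mul_deriv_eq_deriv_mul_of_hasDerivWithinAt hpow (by rwa [uIcc_of_le zero_le_one])
      ((continuous_const.mul (continuous_pow _)).intervalIntegrable _ _) hK',
    ← intervalIntegral.integral_const_mul]
  simp only [one_pow, one_mul, zero_pow hD.ne', zero_mul, sub_zero, mul_assoc, sub_sub_cancel]

theorem pca_kernel_expectation_asymptotics_general
    {Ω : Type*} [MeasurableSpace Ω] (μ : Measure Ω) [IsProbabilityMeasure μ]
    (V : Ω → ℝ) (hV : Measurable V) (hVnonneg : ∀ ω, 0 ≤ V ω)
    (D : ℕ) (hD : 0 < D)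
    (F : ℝ → ℝ) (hF : ∀ h : ℝ, F h = (μ {ω | V ω ≤ h}).toReal)
    (hFpos : ∀ h : ℝ, 0 < h → 0 < F h)
    (hRV : ∀ u : ℝ, 0 < u →
      Tendsto (fun s : ℝ => F (s * u) / F s) (nhdsWithin 0 (Set.Ioi 0)) (nhds ((u : ℝ) ^ D)))
    (K K' : ℝ → ℝ)
    (hderiv : ∀ s ∈ Set.Icc (0:ℝ) 1, HasDerivWithinAt K (K' s) (Set.Icc 0 1) s)
    (hK'cont : ContinuousOn K' (Set.Icc 0 1))
    (hKzero : ∀ v : ℝ, 1 < v → K v = 0)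
    (h : ℕ → ℝ) (hhpos : ∀ n, 0 < h n)
    (hhlim : Tendsto h atTop (nhds 0)) :
    Tendsto (fun n => (∫ ω, K (V ω / h n) ∂μ) / F (h n)) atTop
      (nhds ((D : ℝ) * ∫ s in (0:ℝ)..1, s ^ (D - 1) * K s)) := by
  have hFmono : Monotone F := fun a b hab => by
    simp only [hF]
    exact ENNReal.toReal_mono (measure_ne_top _ _) (measure_mono fun ω hω => le_trans hω hab)
  have hK'int : IntegrableOn K' (Icc 0 1) := hK'cont.integrableOn_Icc
  have hK'Ioc : IntegrableOn K' (Ioc 0 1) := hK'int.mono_set Ioc_subset_Icc_self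
  have hK : ∀ a ∈ Icc (0 : ℝ) 1, K a = K 1 - ∫ s in a..1, K' s := fun a ha => by
    rw [integral_eq_sub_of_hasDerivWithinAt_Icc hderiv hK'int ha, sub_sub_cancel]
  have hratio : ∀ n, (∫ ω, K (V ω / h n) ∂μ) / F (h n) =
      K 1 - ∫ s in Ioc 0 1, F (h n * s) / F (h n) * K' s := fun n => by
    have hcdf : ∀ s, μ.real {ω | V ω / h n ≤ s} = F (h n * s) := fun s => by
      simp only [div_le_iff₀' (hhpos n), hF, measureReal_def]
    rw [integral_comp_eq_sub_integral_measureReal_le (hV.div_const _)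
        (fun ω => div_nonneg (hVnonneg ω) (hhpos n).le) hK'Ioc hK hKzero,
      hcdf, mul_one, sub_div, mul_div_cancel_right₀ _ (hFpos _ (hhpos n)).ne',
      ← MeasureTheory.integral_div]
    simp only [hcdf, div_mul_eq_mul_div]
  have hlim := (tendsto_setIntegral_div_mul_of_tendsto_div hFmono hFpos hK'Ioc
    fun u hu => hRV u hu.1).comp (tendsto_nhdsWithin_iff.2 ⟨hhlim, .of_forall hhpos⟩)
  rw [← sub_integral_pow_mul_deriv hderiv (hK'cont.intervalIntegrable_of_Icc zero_le_one) hD,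
    intervalIntegral.integral_of_le zero_le_one]
  exact (tendsto_const_nhds.sub hlim).congr fun n => (hratio n).symm

/-- Lemma L1 of the paper in abstract form. If `F`, the cdf of the
nonnegative random variable `V`, is regularly varying at `0` with index `D` and
positive on `(0,∞)`, `K` is `C¹` on `[0,1]`, nonnegative, and vanishes beyond `1`,
and `h_n ↓ 0`, then `E[K(V/h_n)]/F(h_n) → D ∫₀¹ s^{D−1} K(s) ds`. -/
theorem pca_kernel_expectation_asymptotics
    {Ω : Type*} [MeasurableSpace Ω] (μ : Measure Ω) [IsProbabilityMeasure μ]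
    (V : Ω → ℝ) (hV : Measurable V) (hVnonneg : ∀ ω, 0 ≤ V ω)
    (D : ℕ) (hD : 0 < D)
    (F : ℝ → ℝ) (hF : ∀ h : ℝ, F h = (μ {ω | V ω ≤ h}).toReal)
    (hFpos : ∀ h : ℝ, 0 < h → 0 < F h)
    (hRV : ∀ u : ℝ, 0 < u →
      Tendsto (fun s : ℝ => F (s * u) / F s) (nhdsWithin 0 (Set.Ioi 0)) (nhds ((u : ℝ) ^ D)))
    (K K' : ℝ → ℝ)
    (hderiv : ∀ s ∈ Set.Icc (0:ℝ) 1, HasDerivWithinAt K (K' s) (Set.Icc 0 1) s)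
    (hK'cont : ContinuousOn K' (Set.Icc 0 1))
    (hKnonneg : ∀ s ∈ Set.Icc (0:ℝ) 1, 0 ≤ K s)
    (hKzero : ∀ v : ℝ, 1 < v → K v = 0)
    (h : ℕ → ℝ) (hhpos : ∀ n, 0 < h n) (hhanti : Antitone h)
    (hhlim : Tendsto h atTop (nhds 0)) :
    Tendsto (fun n => (∫ ω, K (V ω / h n) ∂μ) / F (h n)) atTop
      (nhds ((D : ℝ) * ∫ s in (0:ℝ)..1, s ^ (D - 1) * K s)) :=
  pca_kernel_expectation_asymptotics_general μ V hV hVnonneg D hD F hF hFpos hRV K K' hderiv hK'cont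
    hKzero h hhpos hhlim
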